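/- arXiv:2307.16637 — 4 statements merged into one kernel-verified Lean document; each statement's English description precedes it below -/
import Mathlib

section
/- Let b ≥ 2 be an integer and let f : ℝ → [0,∞) be a bounded integrable 1-periodic function. Then for any integer N ≥ 1, ∫₀¹ ∏_{0 ≤ n < N} f(α b^n) dα ≤ ( sup_{0 ≤ θ ≤ 1} (1/b) ∑_{0 ≤ n < b} f((n + θ)/b) )^N. -/
open Real MeasureTheory

/-- Ergodic-type integral bound: for a bounded integrable `1`-periodic `f : ℝ → [0,∞)` and
any integer `N ≥ 1`,
`∫₀¹ ∏_{0 ≤ n < N} f(α bⁿ) dα ≤ (sup_{0 ≤ θ ≤ 1} (1/b) ∑_{0 ≤ n < b} f((n+θ)/b))^N`. -/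
theorem ergodic_integral_bound (b : ℕ) (hb : 2 ≤ b) (f : ℝ → ℝ)
    (hnonneg : ∀ x, 0 ≤ f x) (hbdd : ∃ C : ℝ, ∀ x, f x ≤ C)
    (hint : IntervalIntegrable f MeasureTheory.volume 0 1)
    (hper : ∀ x, f (x + 1) = f x) (N : ℕ) (hN : 1 ≤ N) :
    ∫ α in (0:ℝ)..1, ∏ n ∈ Finset.range N, f (α * (b : ℝ) ^ n) ≤
      (⨆ θ : Set.Icc (0:ℝ) 1, (1 / (b : ℝ)) * ∑ n ∈ Finset.range b, f (((n : ℝ) + θ) / b)) ^ N := by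
  obtain ⟨C, hC⟩ := hbdd
  have hb0 : (0:ℝ) < (b:ℝ) := by exact_mod_cast (by omega : 0 < b)
  have hbne : (b:ℝ) ≠ 0 := ne_of_gt hb0
  have hC0 : 0 ≤ C := le_trans (hnonneg 0) (hC 0)
  have hper1 : Function.Periodic f 1 := hper
  have hper_int : ∀ (x : ℝ) (j : ℤ), f (x + j) = f x := by
    intro x j
    have := (hper1.int_mul j) x
    simpa using this
  have hper_nat : ∀ (x : ℝ) (j : ℕ), f (x + j) = f x := by
    intro x j
    have := hper_int x j
    simpa using this
  -- f is interval integrable on every interval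
  have hunit : ∀ n : ℤ, IntervalIntegrable f volume (n:ℝ) ((n:ℝ) + 1) := by
    intro n
    have h := hint.comp_add_right (-(n:ℝ))
    have heq : (fun x => f (x + -(n:ℝ))) = f := funext fun x => by
      have := hper_int x (-n)
      simpa using this
    rw [heq] at h
    rw [show (0 - -(n:ℝ)) = (n:ℝ) by ring, show (1 - -(n:ℝ)) = (n:ℝ) + 1 by ring] at h
    exact h
  have hseg : ∀ (n : ℤ) (m : ℕ), IntervalIntegrable f volume (n:ℝ) ((n:ℝ) + m) := by
    intro n m
    induction m with
    | zero => simpa using (IntervalIntegrable.refl (f := f) (μ := volume) (a := (n:ℝ)))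
    | succ m ih =>
        have h2 := hunit (n + m)
        push_cast at h2
        push_cast
        rw [← add_assoc]
        exact ih.trans h2
  have hf_ii' : ∀ a c : ℝ, a ≤ c → IntervalIntegrable f volume a c := by
    intro a c h
    have h1 : ((⌊a⌋ : ℝ)) ≤ a := Int.floor_le a
    have h2 : c ≤ (⌊a⌋ : ℝ) + (⌈c - (⌊a⌋:ℝ)⌉₊ : ℝ) := by
      have := Nat.le_ceil (c - (⌊a⌋:ℝ)); linarith
    refine (hseg ⌊a⌋ ⌈c - (⌊a⌋:ℝ)⌉₊).mono_set ?_
    rw [Set.uIcc_of_le h, Set.uIcc_of_le (by linarith : ((⌊a⌋:ℝ)) ≤ (⌊a⌋:ℝ) + (⌈c - (⌊a⌋:ℝ)⌉₊:ℝ))]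
    exact Set.Icc_subset_Icc h1 h2
  have hf_ii : ∀ a c : ℝ, IntervalIntegrable f volume a c := by
    intro a c
    rcases le_total a c with h | h
    · exact hf_ii' a c h
    · exact (hf_ii' c a h).symm
  -- integrability of the factors
  have int_factor : ∀ n : ℕ, IntervalIntegrable (fun α => f (α * (b:ℝ)^n)) volume 0 1 := by
    intro n
    have h := (hf_ii 0 ((b:ℝ)^n)).comp_mul_right (c := (b:ℝ)^n)
    rwa [zero_div, div_self (pow_ne_zero n hbne)] at h
  have g_nonneg : ∀ (n:ℕ) (α:ℝ), 0 ≤ ∏ i ∈ Finset.range n, f (α * (b:ℝ)^i) :=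
    fun n α => Finset.prod_nonneg fun i _ => hnonneg _
  have g_bdd : ∀ (n:ℕ) (α:ℝ), ‖∏ i ∈ Finset.range n, f (α * (b:ℝ)^i)‖ ≤ C^n := by
    intro n α
    rw [Real.norm_eq_abs, abs_of_nonneg (g_nonneg n α)]
    calc ∏ i ∈ Finset.range n, f (α * (b:ℝ)^i) ≤ ∏ _i ∈ Finset.range n, C :=
          Finset.prod_le_prod (fun i _ => hnonneg _) (fun i _ => hC _)
      _ = C^n := by simp [Finset.prod_const]
  have int_g : ∀ n : ℕ, IntervalIntegrable
      (fun α => ∏ i ∈ Finset.range n, f (α * (b:ℝ)^i)) volume 0 1 := by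
    intro n
    induction n with
    | zero =>
        simp only [Finset.prod_range_zero]
        exact intervalIntegrable_const
    | succ n ih =>
        have heq : (fun α => ∏ i ∈ Finset.range (n+1), f (α * (b:ℝ)^i))
            = fun α => (∏ i ∈ Finset.range n, f (α * (b:ℝ)^i)) * f (α * (b:ℝ)^n) :=
          funext fun α => Finset.prod_range_succ _ _
        rw [heq, intervalIntegrable_iff_integrableOn_Ioc_of_le zero_le_one]
        rw [intervalIntegrable_iff_integrableOn_Ioc_of_le zero_le_one] at ih
        have hfm := int_factor n
        rw [intervalIntegrable_iff_integrableOn_Ioc_of_le zero_le_one] at hfm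
        exact hfm.bdd_mul ih.aestronglyMeasurable (ae_of_all _ fun x => g_bdd n x)
  have int_fk : ∀ k : ℕ, IntervalIntegrable (fun θ => f (((k:ℝ) + θ) / (b:ℝ))) volume 0 1 := by
    intro k
    have h1 := (hf_ii ((k:ℝ)/(b:ℝ)) (((k:ℝ)+1)/(b:ℝ))).comp_mul_right (c := (b:ℝ)⁻¹)
    have e1 : ((k:ℝ)/(b:ℝ)) / (b:ℝ)⁻¹ = (k:ℝ) := by field_simp
    have e2 : (((k:ℝ)+1)/(b:ℝ)) / (b:ℝ)⁻¹ = (k:ℝ)+1 := by field_simp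
    rw [e1, e2] at h1
    have h2 : IntervalIntegrable (fun x : ℝ => f ((x + (k:ℝ)) * (b:ℝ)⁻¹)) volume
        ((k:ℝ) - (k:ℝ)) (((k:ℝ)+1) - (k:ℝ)) := h1.comp_add_right (k:ℝ)
    have e3 : (k:ℝ) - (k:ℝ) = 0 := by ring
    have e4 : ((k:ℝ)+1) - (k:ℝ) = 1 := by ring
    have e5 : (fun x:ℝ => f ((x + (k:ℝ)) * (b:ℝ)⁻¹)) = fun θ => f (((k:ℝ) + θ) / (b:ℝ)) :=
      funext fun θ => by rw [div_eq_mul_inv, add_comm]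
    rwa [e3, e4, e5] at h2
  -- the supremum
  set M := (⨆ θ : Set.Icc (0:ℝ) 1, (1 / (b : ℝ)) * ∑ n ∈ Finset.range b, f (((n : ℝ) + θ) / b))
    with hMdef
  have hbdd_range : BddAbove (Set.range fun θ : Set.Icc (0:ℝ) 1 =>
      (1 / (b : ℝ)) * ∑ n ∈ Finset.range b, f (((n : ℝ) + θ) / b)) := by
    refine ⟨C, ?_⟩
    rintro x ⟨θ, rfl⟩
    calc (1/(b:ℝ)) * ∑ n ∈ Finset.range b, f (((n:ℝ) + θ)/(b:ℝ))
        ≤ (1/(b:ℝ)) * ∑ _n ∈ Finset.range b, C :=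
          mul_le_mul_of_nonneg_left (Finset.sum_le_sum fun i _ => hC _) (by positivity)
      _ = C := by
          rw [Finset.sum_const, Finset.card_range, nsmul_eq_mul]
          field_simp
  have hM_le : ∀ θ : ℝ, θ ∈ Set.Icc (0:ℝ) 1 →
      (1/(b:ℝ)) * ∑ k ∈ Finset.range b, f (((k:ℝ)+θ)/(b:ℝ)) ≤ M := by
    intro θ hθ
    rw [hMdef]
    exact le_ciSup hbdd_range ⟨θ, hθ⟩
  have hM0 : 0 ≤ M := by
    have h00 : (0:ℝ) ≤ (1/(b:ℝ)) * ∑ k ∈ Finset.range b, f (((k:ℝ) + 0)/(b:ℝ)) :=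
      mul_nonneg (by positivity) (Finset.sum_nonneg fun i _ => hnonneg _)
    exact h00.trans (hM_le 0 ⟨le_refl _, zero_le_one⟩)
  -- the main induction
  have main : ∀ n : ℕ,
      (∫ α in (0:ℝ)..1, ∏ i ∈ Finset.range n, f (α * (b:ℝ)^i)) ≤ M ^ n := by
    intro n
    induction n with
    | zero => simp
    | succ n ih =>
        -- splitting [0,1] into b subintervals
        have hadj : ∀ k, k < b → IntervalIntegrable
            (fun α => ∏ i ∈ Finset.range (n+1), f (α * (b:ℝ)^i)) volume
            ((k:ℝ)/(b:ℝ)) (((k:ℝ)+1)/(b:ℝ)) := by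
          intro k hk
          apply (int_g (n+1)).mono_set
          have hk1 : (k:ℝ) + 1 ≤ (b:ℝ) := by exact_mod_cast Nat.succ_le_of_lt hk
          have h1 : (0:ℝ) ≤ (k:ℝ)/(b:ℝ) := by positivity
          have h2 : (k:ℝ)/(b:ℝ) ≤ ((k:ℝ)+1)/(b:ℝ) := by
            gcongr
            linarith
          have h3 : ((k:ℝ)+1)/(b:ℝ) ≤ 1 := by rw [div_le_one hb0]; exact hk1
          rw [Set.uIcc_of_le h2, Set.uIcc_of_le zero_le_one]
          exact Set.Icc_subset_Icc h1 h3
        have hadj' : ∀ k, k < b → IntervalIntegrable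
            (fun α => ∏ i ∈ Finset.range (n+1), f (α * (b:ℝ)^i)) volume
            ((fun k : ℕ => (k:ℝ)/(b:ℝ)) k) ((fun k : ℕ => (k:ℝ)/(b:ℝ)) (k+1)) := by
          intro k hk
          simp only [Nat.cast_add, Nat.cast_one]
          exact hadj k hk
        have hsplit := intervalIntegral.sum_integral_adjacent_intervals
          (a := fun k : ℕ => (k:ℝ)/(b:ℝ)) (μ := volume) hadj'
        simp only [Nat.cast_zero, zero_div, Nat.cast_add, Nat.cast_one] at hsplit
        rw [div_self hbne] at hsplit
        -- change of variables on each subinterval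
        have hsub : ∀ k : ℕ,
            (∫ α in ((k:ℝ)/(b:ℝ))..(((k:ℝ)+1)/(b:ℝ)),
                ∏ i ∈ Finset.range (n+1), f (α * (b:ℝ)^i))
            = ∫ θ in (0:ℝ)..1, (1/(b:ℝ)) *
                ((∏ i ∈ Finset.range n, f (θ * (b:ℝ)^i)) * f (((k:ℝ)+θ)/(b:ℝ))) := by
          intro k
          have hpt : ∀ θ : ℝ,
              (∏ i ∈ Finset.range (n+1), f (((1/(b:ℝ))*θ + (k:ℝ)/(b:ℝ)) * (b:ℝ)^i))
              = (∏ i ∈ Finset.range n, f (θ * (b:ℝ)^i)) * f (((k:ℝ)+θ)/(b:ℝ)) := by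
            intro θ
            rw [Finset.prod_range_succ']
            congr 1
            · refine Finset.prod_congr rfl fun i _ => ?_
              have harg : ((1/(b:ℝ))*θ + (k:ℝ)/(b:ℝ)) * (b:ℝ)^(i+1)
                  = θ * (b:ℝ)^i + ((k * b^i : ℕ):ℝ) := by
                push_cast
                field_simp
                ring
              rw [harg, hper_nat]
            · have harg0 : ((1/(b:ℝ))*θ + (k:ℝ)/(b:ℝ)) * (b:ℝ)^0 = ((k:ℝ)+θ)/(b:ℝ) := by
                rw [pow_zero, mul_one]
                field_simp
                ring
              rw [harg0]
          have hcm : (∫ x in (0:ℝ)..1, (fun α => ∏ i ∈ Finset.range (n+1), f (α * (b:ℝ)^i))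
                ((1/(b:ℝ)) * x + (k:ℝ)/(b:ℝ)))
              = (1/(b:ℝ))⁻¹ • ∫ x in ((1/(b:ℝ))*0 + (k:ℝ)/(b:ℝ))..((1/(b:ℝ))*1 + (k:ℝ)/(b:ℝ)),
                (fun α => ∏ i ∈ Finset.range (n+1), f (α * (b:ℝ)^i)) x :=
            intervalIntegral.integral_comp_mul_add (a := 0) (b := 1)
              (fun α => ∏ i ∈ Finset.range (n+1), f (α * (b:ℝ)^i))
              (one_div_ne_zero hbne) ((k:ℝ)/(b:ℝ))
          calc (∫ α in ((k:ℝ)/(b:ℝ))..(((k:ℝ)+1)/(b:ℝ)),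
                  ∏ i ∈ Finset.range (n+1), f (α * (b:ℝ)^i))
              = ∫ x in ((1/(b:ℝ))*0 + (k:ℝ)/(b:ℝ))..((1/(b:ℝ))*1 + (k:ℝ)/(b:ℝ)),
                  ∏ i ∈ Finset.range (n+1), f (x * (b:ℝ)^i) := by
                rw [show (1/(b:ℝ))*0 + (k:ℝ)/(b:ℝ) = (k:ℝ)/(b:ℝ) by ring,
                    show (1/(b:ℝ))*1 + (k:ℝ)/(b:ℝ) = ((k:ℝ)+1)/(b:ℝ) by
                      field_simp
                      ring]
            _ = (1/(b:ℝ)) • ∫ x in (0:ℝ)..1,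
                  (fun α => ∏ i ∈ Finset.range (n+1), f (α * (b:ℝ)^i))
                    ((1/(b:ℝ)) * x + (k:ℝ)/(b:ℝ)) := by
                rw [hcm, smul_smul, mul_inv_cancel₀ (one_div_ne_zero hbne), one_smul]
            _ = (1/(b:ℝ)) • ∫ θ in (0:ℝ)..1,
                  (∏ i ∈ Finset.range n, f (θ * (b:ℝ)^i)) * f (((k:ℝ)+θ)/(b:ℝ)) := by
                congr 1
                apply intervalIntegral.integral_congr
                intro θ _
                exact hpt θ
            _ = ∫ θ in (0:ℝ)..1, (1/(b:ℝ)) *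
                  ((∏ i ∈ Finset.range n, f (θ * (b:ℝ)^i)) * f (((k:ℝ)+θ)/(b:ℝ))) := by
                rw [smul_eq_mul, ← intervalIntegral.integral_const_mul]
        -- integrability of the summands
        have hterm_int : ∀ k ∈ Finset.range b, IntervalIntegrable
            (fun θ => (1/(b:ℝ)) *
              ((∏ i ∈ Finset.range n, f (θ * (b:ℝ)^i)) * f (((k:ℝ)+θ)/(b:ℝ)))) volume 0 1 := by
          intro k _
          apply IntervalIntegrable.const_mul
          rw [intervalIntegrable_iff_integrableOn_Ioc_of_le zero_le_one]
          have hfk := int_fk k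
          rw [intervalIntegrable_iff_integrableOn_Ioc_of_le zero_le_one] at hfk
          have hg := int_g n
          rw [intervalIntegrable_iff_integrableOn_Ioc_of_le zero_le_one] at hg
          exact hfk.bdd_mul hg.aestronglyMeasurable (ae_of_all _ fun x => g_bdd n x)
        have hcombine : (∑ k ∈ Finset.range b, ∫ θ in (0:ℝ)..1, (1/(b:ℝ)) *
              ((∏ i ∈ Finset.range n, f (θ * (b:ℝ)^i)) * f (((k:ℝ)+θ)/(b:ℝ))))
            = ∫ θ in (0:ℝ)..1, ∑ k ∈ Finset.range b, (1/(b:ℝ)) *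
              ((∏ i ∈ Finset.range n, f (θ * (b:ℝ)^i)) * f (((k:ℝ)+θ)/(b:ℝ))) :=
          (intervalIntegral.integral_finset_sum hterm_int).symm
        have hmono : (∫ θ in (0:ℝ)..1, ∑ k ∈ Finset.range b, (1/(b:ℝ)) *
              ((∏ i ∈ Finset.range n, f (θ * (b:ℝ)^i)) * f (((k:ℝ)+θ)/(b:ℝ))))
            ≤ ∫ θ in (0:ℝ)..1, (∏ i ∈ Finset.range n, f (θ * (b:ℝ)^i)) * M := by
          have hsum_int : IntervalIntegrable (fun θ => ∑ k ∈ Finset.range b, (1/(b:ℝ)) *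
              ((∏ i ∈ Finset.range n, f (θ * (b:ℝ)^i)) * f (((k:ℝ)+θ)/(b:ℝ)))) volume 0 1 := by
            have h := IntervalIntegrable.sum (Finset.range b) hterm_int
            have heqf : (∑ k ∈ Finset.range b, fun θ : ℝ => (1/(b:ℝ)) *
                ((∏ i ∈ Finset.range n, f (θ * (b:ℝ)^i)) * f (((k:ℝ)+θ)/(b:ℝ))))
                = fun θ : ℝ => ∑ k ∈ Finset.range b, (1/(b:ℝ)) *
                ((∏ i ∈ Finset.range n, f (θ * (b:ℝ)^i)) * f (((k:ℝ)+θ)/(b:ℝ))) :=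
              funext fun θ => by simp
            rwa [heqf] at h
          apply intervalIntegral.integral_mono_on zero_le_one hsum_int ((int_g n).mul_const M)
          intro θ hθ
          have hsum : (∑ k ∈ Finset.range b, (1/(b:ℝ)) *
                ((∏ i ∈ Finset.range n, f (θ * (b:ℝ)^i)) * f (((k:ℝ)+θ)/(b:ℝ))))
              = (∏ i ∈ Finset.range n, f (θ * (b:ℝ)^i)) *
                ((1/(b:ℝ)) * ∑ k ∈ Finset.range b, f (((k:ℝ)+θ)/(b:ℝ))) := by
            rw [Finset.mul_sum, Finset.mul_sum]
            exact Finset.sum_congr rfl fun i _ => by ring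
          rw [hsum]
          exact mul_le_mul_of_nonneg_left (hM_le θ hθ) (g_nonneg n θ)
        calc (∫ α in (0:ℝ)..1, ∏ i ∈ Finset.range (n+1), f (α * (b:ℝ)^i))
            = ∑ k ∈ Finset.range b, ∫ α in ((k:ℝ)/(b:ℝ))..(((k:ℝ)+1)/(b:ℝ)),
                ∏ i ∈ Finset.range (n+1), f (α * (b:ℝ)^i) := hsplit.symm
          _ = ∑ k ∈ Finset.range b, ∫ θ in (0:ℝ)..1, (1/(b:ℝ)) *
                ((∏ i ∈ Finset.range n, f (θ * (b:ℝ)^i)) * f (((k:ℝ)+θ)/(b:ℝ))) :=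
              Finset.sum_congr rfl fun k _ => hsub k
          _ = ∫ θ in (0:ℝ)..1, ∑ k ∈ Finset.range b, (1/(b:ℝ)) *
                ((∏ i ∈ Finset.range n, f (θ * (b:ℝ)^i)) * f (((k:ℝ)+θ)/(b:ℝ))) := hcombine
          _ ≤ ∫ θ in (0:ℝ)..1, (∏ i ∈ Finset.range n, f (θ * (b:ℝ)^i)) * M := hmono
          _ = (∫ θ in (0:ℝ)..1, ∏ i ∈ Finset.range n, f (θ * (b:ℝ)^i)) * M :=
              intervalIntegral.integral_mul_const _ _
          _ ≤ M ^ n * M := mul_le_mul_of_nonneg_right ih hM0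
          _ = M ^ (n+1) := (pow_succ M n).symm
  exact main N
end

section
/- Let b ≥ 2 be an integer and let α be a real number with ‖α‖ ≤ 1/b. Then φ_b(α) ≤ b · exp( −(π²/6)(b²−1)‖α‖² ). -/
open Real

lemma aux_G_nonneg : ∀ x ∈ Set.Icc (0:ℝ) π, 0 ≤ Real.sin x - x * Real.cos x := by
  have hmono : MonotoneOn (fun x : ℝ => Real.sin x - x * Real.cos x) (Set.Icc 0 π) := by
    apply monotoneOn_of_deriv_nonneg (convex_Icc 0 π)
    · fun_prop
    · intro x hx
      exact (((Real.hasDerivAt_sin x).sub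
        ((hasDerivAt_id x).mul (Real.hasDerivAt_cos x))).differentiableAt).differentiableWithinAt
    · intro x hx
      rw [interior_Icc] at hx
      have hd : HasDerivAt (fun x : ℝ => Real.sin x - x * Real.cos x)
          (Real.cos x - (1 * Real.cos x + x * -Real.sin x)) x :=
        (Real.hasDerivAt_sin x).sub ((hasDerivAt_id x).mul (Real.hasDerivAt_cos x))
      rw [hd.deriv]
      have := Real.sin_nonneg_of_nonneg_of_le_pi hx.1.le hx.2.le
      nlinarith [hx.1]
  intro x hx
  have := hmono (by simp [Real.pi_nonneg] : (0:ℝ) ∈ Set.Icc 0 π) hx hx.1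
  simpa using this

lemma aux_F_nonneg : ∀ x ∈ Set.Icc (0:ℝ) π,
    0 ≤ 3 * Real.sin x - 3 * x * Real.cos x - x ^ 2 * Real.sin x := by
  have hmono : MonotoneOn (fun x : ℝ => 3 * Real.sin x - 3 * x * Real.cos x - x ^ 2 * Real.sin x)
      (Set.Icc 0 π) := by
    apply monotoneOn_of_deriv_nonneg (convex_Icc 0 π)
    · fun_prop
    · intro x hx
      apply DifferentiableAt.differentiableWithinAt
      fun_prop
    · intro x hx
      rw [interior_Icc] at hx
      have hd : HasDerivAt (fun x : ℝ => 3 * Real.sin x - 3 * x * Real.cos x - x ^ 2 * Real.sin x)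
          ((3 * Real.cos x - (3 * Real.cos x + 3 * x * -Real.sin x))
            - (2 * x * Real.sin x + x ^ 2 * Real.cos x)) x := by
        have h1 : HasDerivAt (fun x : ℝ => 3 * x) 3 x := by
          simpa using (hasDerivAt_id x).const_mul (3:ℝ)
        have h2 : HasDerivAt (fun x : ℝ => x ^ 2) (2 * x) x := by
          simpa using hasDerivAt_pow 2 x
        exact (((Real.hasDerivAt_sin x).const_mul 3).sub
          (h1.mul (Real.hasDerivAt_cos x))).sub (h2.mul (Real.hasDerivAt_sin x))
      rw [hd.deriv]
      have hG := aux_G_nonneg x (Set.mem_Icc.2 ⟨hx.1.le, hx.2.le⟩)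
      nlinarith [hx.1]
  intro x hx
  have := hmono (by simp [Real.pi_nonneg] : (0:ℝ) ∈ Set.Icc 0 π) hx hx.1
  simpa using this



lemma aux_H_anti : AntitoneOn (fun x : ℝ => Real.sin x / x * Real.exp (x ^ 2 / 6))
    (Set.Ioc 0 π) := by
  apply antitoneOn_of_deriv_nonpos (convex_Ioc 0 π)
  · apply ContinuousOn.mul
    · exact (Real.continuous_sin.continuousOn).div continuousOn_id
        (fun x hx => ne_of_gt hx.1)
    · fun_prop
  · intro x hx
    rw [interior_Ioc] at hx
    apply DifferentiableAt.differentiableWithinAt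
    apply DifferentiableAt.mul
    · exact Real.differentiable_sin.differentiableAt.div differentiableAt_id (ne_of_gt hx.1)
    · fun_prop
  · intro x hx
    rw [interior_Ioc] at hx
    have hx0 : x ≠ 0 := ne_of_gt hx.1
    have hd : HasDerivAt (fun x : ℝ => Real.sin x / x * Real.exp (x ^ 2 / 6))
        ((Real.cos x * x - Real.sin x * 1) / x ^ 2 * Real.exp (x ^ 2 / 6)
          + Real.sin x / x * (Real.exp (x ^ 2 / 6) * (2 * x / 6))) x := by
      have h1 : HasDerivAt (fun x : ℝ => Real.sin x / x)
          ((Real.cos x * x - Real.sin x * 1) / x ^ 2) x :=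
        (Real.hasDerivAt_sin x).div (hasDerivAt_id x) hx0
      have h2 : HasDerivAt (fun x : ℝ => Real.exp (x ^ 2 / 6))
          (Real.exp (x ^ 2 / 6) * (2 * x / 6)) x := by
        have : HasDerivAt (fun x : ℝ => x ^ 2 / 6) (2 * x / 6) x := by
          simpa using (hasDerivAt_pow 2 x).div_const 6
        exact (Real.hasDerivAt_exp _).comp x this
      exact h1.mul h2
    rw [hd.deriv]
    have hF := aux_F_nonneg x (Set.mem_Icc.2 ⟨hx.1.le, hx.2.le⟩)
    have hexp : 0 < Real.exp (x ^ 2 / 6) := Real.exp_pos _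
    have key : (Real.cos x * x - Real.sin x * 1) / x ^ 2 * Real.exp (x ^ 2 / 6)
          + Real.sin x / x * (Real.exp (x ^ 2 / 6) * (2 * x / 6))
        = -(Real.exp (x ^ 2 / 6) / (3 * x ^ 2))
            * (3 * Real.sin x - 3 * x * Real.cos x - x ^ 2 * Real.sin x) := by
      field_simp
      ring
    rw [key]
    have : 0 < Real.exp (x ^ 2 / 6) / (3 * x ^ 2) := by positivity
    nlinarith



lemma aux_ratio (b : ℕ) (hb : 2 ≤ b) (t : ℝ) (ht : 0 < t) (ht' : t ≤ 1 / b) :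
    Real.sin (π * ((b:ℝ) * t)) / Real.sin (π * t) ≤
      (b : ℝ) * Real.exp (-(π ^ 2 / 6) * ((b : ℝ) ^ 2 - 1) * t ^ 2) := by
  have hb0 : (0:ℝ) < b := by positivity
  have hb1 : (1:ℝ) ≤ b := by exact_mod_cast Nat.one_le_of_lt hb
  have hbt : (b:ℝ) * t ≤ 1 := by
    rw [le_div_iff₀ hb0] at ht'; linarith [ht']
  have hu : π * t ∈ Set.Ioc (0:ℝ) π := by
    refine ⟨by positivity, by nlinarith [Real.pi_pos]⟩
  have hbu : π * ((b:ℝ) * t) ∈ Set.Ioc (0:ℝ) π := by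
    refine ⟨by positivity, by nlinarith [Real.pi_pos]⟩
  have hb2 : (2:ℝ) ≤ b := by exact_mod_cast hb
  have hle : π * t ≤ π * ((b:ℝ) * t) := by
    nlinarith [mul_nonneg (mul_nonneg Real.pi_pos.le ht.le) (sub_nonneg.2 hb1)]
  have key := aux_H_anti hu hbu hle
  simp only at key
  set s1 := Real.sin (π * t) with hs1
  set s2 := Real.sin (π * ((b:ℝ) * t)) with hs2
  set E1 := Real.exp ((π * t) ^ 2 / 6) with hE1
  set E2 := Real.exp ((π * ((b:ℝ) * t)) ^ 2 / 6) with hE2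
  set E := Real.exp (-(π ^ 2 / 6) * ((b : ℝ) ^ 2 - 1) * t ^ 2) with hE
  have hp1 : 0 < π * t := hu.1
  have hp2 : 0 < π * ((b:ℝ) * t) := hbu.1
  have hE2p : 0 < E2 := Real.exp_pos _
  have hEeq : E * E2 = E1 := by
    rw [hE, hE2, hE1, ← Real.exp_add]
    congr 1
    ring
  have hsin_t : 0 < s1 := by
    apply Real.sin_pos_of_pos_of_lt_pi hp1
    have hbt2 : t < (b:ℝ) * t := by
      nlinarith [mul_pos ht (show (0:ℝ) < (b:ℝ) - 1 by linarith)]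
    nlinarith [Real.pi_pos]
  have k2 : s2 * E2 * (π * t) ≤ (b : ℝ) * s1 * E1 * (π * t) := by
    rw [div_mul_eq_mul_div, div_mul_eq_mul_div, div_le_div_iff₀ hp2 hp1] at key
    nlinarith [key]
  have k3 : s2 * E2 ≤ (b : ℝ) * s1 * E1 := le_of_mul_le_mul_right k2 hp1
  have k4 : s2 * E2 ≤ ((b : ℝ) * E * s1) * E2 := by
    calc s2 * E2 ≤ (b : ℝ) * s1 * E1 := k3
      _ = ((b : ℝ) * E * s1) * E2 := by rw [← hEeq]; ring
  have k5 : s2 ≤ (b : ℝ) * E * s1 := le_of_mul_le_mul_right k4 hE2p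
  rw [div_le_iff₀ hsin_t]
  linarith


lemma aux_norm_exp_sub_one (θ : ℝ) :
    ‖Complex.exp ((θ : ℂ) * Complex.I) - 1‖ = 2 * |Real.sin (θ / 2)| := by
  rw [Complex.exp_mul_I]
  have h1 : Complex.cos θ + Complex.sin θ * Complex.I - 1
      = Complex.ofReal (Real.cos θ - 1) + Complex.ofReal (Real.sin θ) * Complex.I := by
    rw [Complex.ofReal_sub, Complex.ofReal_cos, Complex.ofReal_sin]
    push_cast
    ring
  rw [h1, Complex.norm_add_mul_I]
  have hc : Real.cos θ = 1 - 2 * Real.sin (θ / 2) ^ 2 := by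
    have h2 := Real.cos_two_mul (θ / 2)
    have h3 := Real.sin_sq_add_cos_sq (θ / 2)
    have : (2 : ℝ) * (θ / 2) = θ := by ring
    rw [this] at h2
    nlinarith
  have h4 : (Real.cos θ - 1) ^ 2 + Real.sin θ ^ 2 = (2 * Real.sin (θ / 2)) ^ 2 := by
    have h5 := Real.sin_sq_add_cos_sq θ
    nlinarith
  rw [h4, Real.sqrt_sq_eq_abs, abs_mul]
  norm_num

lemma aux_abs_sin_int_add (k : ℤ) (x : ℝ) :
    |Real.sin (π * ((k : ℝ) + x))| = |Real.sin (π * x)| := by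
  have : π * ((k : ℝ) + x) = (k : ℝ) * π + π * x := by ring
  rw [this, Real.sin_add, Real.sin_int_mul_pi, zero_mul, zero_add, abs_mul,
    Real.abs_cos_int_mul_pi, one_mul]

lemma aux_abs_sin_abs (x : ℝ) (hx : |x| ≤ 1) :
    |Real.sin (π * x)| = Real.sin (π * |x|) := by
  have hnn : 0 ≤ Real.sin (π * |x|) := by
    apply Real.sin_nonneg_of_nonneg_of_le_pi (by positivity)
    nlinarith [Real.pi_pos, abs_nonneg x]
  rcases abs_cases x with ⟨h1, _⟩ | ⟨h1, _⟩
  · rw [h1] at hnn ⊢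
    exact abs_of_nonneg hnn
  · rw [h1] at hnn ⊢
    rw [show π * -x = -(π * x) by ring, Real.sin_neg] at hnn ⊢
    exact abs_of_nonpos (by linarith)



/-- `φ_b(α) = |∑_{0 ≤ m < b} e(αm)|` where `e(x) = exp(2πix)`. -/
noncomputable def phiB (b : ℕ) (α : ℝ) : ℝ :=
  ‖∑ m ∈ Finset.range b, Complex.exp (2 * Real.pi * Complex.I * (α * m))‖

/-- Distance from a real number to its nearest integer. -/
noncomputable def nearestIntDist (x : ℝ) : ℝ := |x - round x|

/-- If `‖α‖ ≤ 1/b` then `φ_b(α) ≤ b · exp(-(π²/6)(b²-1)‖α‖²)`. -/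
theorem phiB_exponential_bound (b : ℕ) (hb : 2 ≤ b) (α : ℝ)
    (hα : nearestIntDist α ≤ 1 / b) :
    phiB b α ≤ (b : ℝ) *
      Real.exp (-(Real.pi ^ 2 / 6) * ((b : ℝ) ^ 2 - 1) * nearestIntDist α ^ 2) := by
  set δ := nearestIntDist α with hδdef
  have hδnn : 0 ≤ δ := abs_nonneg _
  rcases eq_or_lt_of_le hδnn with hδ0 | hδpos
  · -- δ = 0 : α is an integer
    have hαint : α = (round α : ℝ) := by
      have : |α - round α| = 0 := hδ0.symm
      have := abs_eq_zero.mp this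
      linarith
    have hterm : ∀ m ∈ Finset.range b,
        Complex.exp (2 * Real.pi * Complex.I * (α * m)) = 1 := by
      intro m _
      rw [hαint]
      have harg : (2 : ℂ) * Real.pi * Complex.I * ((round α : ℝ) * m)
          = ((round α * m : ℤ) : ℂ) * (2 * Real.pi * Complex.I) := by
        push_cast
        ring
      rw [harg, Complex.exp_int_mul_two_pi_mul_I]
    have hsum : phiB b α = b := by
      rw [phiB, Finset.sum_congr rfl hterm]
      simp
    rw [hsum, ← hδ0]
    simp
  · -- δ > 0
    set r : ℤ := round α with hr
    set ε : ℝ := α - r with hε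
    have hδε : δ = |ε| := rfl
    have hεhalf : |ε| ≤ 1 / 2 := abs_sub_round α
    have hb0 : (0:ℝ) < b := by positivity
    set z : ℂ := Complex.exp (((2 * Real.pi * α : ℝ) : ℂ) * Complex.I) with hz
    have hterm : ∀ m ∈ Finset.range b,
        Complex.exp (2 * Real.pi * Complex.I * (α * m)) = z ^ m := by
      intro m _
      rw [hz, ← Complex.exp_nat_mul]
      congr 1
      push_cast
      ring
    have hz1 : z ≠ 1 := by
      intro h
      rw [hz, Complex.exp_eq_one_iff] at h
      obtain ⟨n, hn⟩ := h
      have h2 : ((2 * Real.pi * α : ℝ) : ℂ) = (n : ℂ) * (2 * Real.pi) := by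
        rw [show (n : ℂ) * (2 * ↑Real.pi * Complex.I) = ((n:ℂ) * (2 * Real.pi)) * Complex.I
          by ring] at hn
        exact mul_right_cancel₀ Complex.I_ne_zero hn
      have h3 : 2 * Real.pi * α = (n : ℝ) * (2 * Real.pi) := by exact_mod_cast h2
      have hαn : α = (n : ℝ) := by
        have h4 : (2 * Real.pi) * α = (2 * Real.pi) * (n : ℝ) := by linear_combination h3
        exact mul_left_cancel₀ (by positivity : (2 * Real.pi : ℝ) ≠ 0) h4
      have : δ = 0 := by
        rw [hδdef, nearestIntDist, hαn]
        simp
      linarith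
    have hsum : phiB b α = ‖z ^ b - 1‖ / ‖z - 1‖ := by
      rw [phiB, Finset.sum_congr rfl hterm, geom_sum_eq hz1, norm_div]
    have hzb : z ^ b = Complex.exp (((2 * Real.pi * ((b:ℝ) * α) : ℝ) : ℂ) * Complex.I) := by
      rw [hz, ← Complex.exp_nat_mul]
      congr 1
      push_cast
      ring
    have hnum : ‖z ^ b - 1‖ = 2 * Real.sin (π * ((b:ℝ) * δ)) := by
      rw [hzb, aux_norm_exp_sub_one]
      have h1 : (2 * Real.pi * ((b:ℝ) * α)) / 2 = π * (((b:ℤ)*r : ℤ) + (b:ℝ) * ε) := by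
        push_cast
        rw [hε]
        ring
      rw [h1, aux_abs_sin_int_add, aux_abs_sin_abs _ ?hle]
      case hle =>
        rw [abs_mul, Nat.abs_cast, ← hδε]
        rw [le_div_iff₀ hb0] at hα
        linarith
      rw [abs_mul, Nat.abs_cast, ← hδε]
    have hden : ‖z - 1‖ = 2 * Real.sin (π * δ) := by
      rw [hz, aux_norm_exp_sub_one]
      have h1 : (2 * Real.pi * α) / 2 = π * ((r : ℝ) + ε) := by
        rw [hε]; ring
      rw [h1, aux_abs_sin_int_add, aux_abs_sin_abs _ (by linarith), ← hδε]
    rw [hsum, hnum, hden]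
    have h2 : (2 : ℝ) * Real.sin (π * ((b:ℝ) * δ)) / (2 * Real.sin (π * δ))
        = Real.sin (π * ((b:ℝ) * δ)) / Real.sin (π * δ) := by
      rw [mul_div_mul_left _ _ (two_ne_zero)]
    rw [h2]
    exact aux_ratio b hb δ hδpos hα
end

section
/- Let b ≥ 2 be an integer and let α, β, γ be real numbers. Then at least one of the inequalities ‖α(b^β + b^{γ+1})‖ ≥ ‖α(b²−1)b^γ‖/(b+1) and ‖α(b^{β+1} + b^γ)‖ ≥ ‖α(b²−1)b^γ‖/(b+1) holds. Moreover, φ_b(α(b^β + b^{γ+1})) · φ_b(α(b^{β+1} + b^γ)) ≤ b · φ_b( ‖α(b²−1)b^γ‖/(b+1) ). -/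
open Real

/-!
For the two arguments `X = α(b^β + b^(γ+1))` and `Y = α(b^(β+1) + b^γ)` one has
`b X - Y = D := α(b²-1)b^γ`, so the triangle inequality for the norm of `ℝ/ℤ` gives
`‖D‖ ≤ b‖X‖ + ‖Y‖`, whence `max(‖X‖, ‖Y‖) ≥ u := ‖D‖/(b+1)`. As `u ≤ 1/(2b)`, bounding the
other factor by `b`, it remains to show `φ_b(x) ≤ φ_b(u)` whenever `u ≤ ‖x‖`. The function
`φ_b` is even and `1`-periodic, so `φ_b(x) = φ_b(‖x‖)`. On `[0, 1/(2b)]` it equals the cosine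
sum `∑_{k<b} cos((2k+1-b)πt)`, all of whose terms decrease there; beyond `1/(2b)` the geometric
sum identity `φ_b(t)|sin πt| = |sin πbt|` gives `φ_b(t) ≤ 1/sin(π/(2b)) = φ_b(1/(2b))`.
-/

open Finset

theorem nearestIntDist_eq_norm (x : ℝ) : nearestIntDist x = ‖(x : UnitAddCircle)‖ :=
  UnitAddCircle.norm_eq.symm

theorem nearestIntDist_le_half (x : ℝ) : nearestIntDist x ≤ 1 / 2 := abs_sub_round x

theorem nearestIntDist_nat_mul_sub_le (n : ℕ) (x y : ℝ) :
    nearestIntDist (n * x - y) ≤ n * nearestIntDist x + nearestIntDist y := by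
  rw [nearestIntDist_eq_norm, nearestIntDist_eq_norm, nearestIntDist_eq_norm, AddCircle.coe_sub,
    ← nsmul_eq_mul, AddCircle.coe_nsmul]
  exact (norm_sub_le _ _).trans (add_le_add_left norm_nsmul_le _)

theorem phiB_le (b : ℕ) (t : ℝ) : phiB b t ≤ b := by
  refine (norm_sum_le _ _).trans_eq ?_
  simp [Complex.norm_exp]

theorem phiB_add_intCast (b : ℕ) (t : ℝ) (n : ℤ) : phiB b (t + n) = phiB b t := by
  unfold phiB
  congr 1
  refine sum_congr rfl fun m _ => ?_
  rw [show 2 * π * Complex.I * (((t + n : ℝ) : ℂ) * m) =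
      2 * π * Complex.I * (t * m) + (n * m : ℤ) * (2 * π * Complex.I) by push_cast; ring,
    Complex.exp_add, Complex.exp_int_mul_two_pi_mul_I, mul_one]

theorem phiB_mul_abs_sin (b : ℕ) (t : ℝ) :
    phiB b t * |sin (π * t)| = |sin (π * (b * t))| := by
  set z := Complex.exp (Complex.I * (2 * π * t : ℝ))
  have hz : ∀ s : ℝ, ‖Complex.exp (Complex.I * (2 * π * s : ℝ)) - 1‖ = 2 * |sin (π * s)| := by
    intro s
    rw [Complex.norm_exp_I_mul_ofReal_sub_one, norm_mul, Real.norm_eq_abs, Real.norm_eq_abs,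
      abs_two]
    ring_nf
  have hzb : z ^ b = Complex.exp (Complex.I * (2 * π * (b * t) : ℝ)) := by
    rw [← Complex.exp_nat_mul]; push_cast; ring_nf
  have hsum :
      ∑ m ∈ range b, Complex.exp (2 * π * Complex.I * (t * m)) = ∑ m ∈ range b, z ^ m := by
    refine sum_congr rfl fun m _ => ?_
    rw [← Complex.exp_nat_mul]; push_cast; ring_nf
  have := congrArg norm (geom_sum_mul z b)
  rw [norm_mul, hz, hzb, hz, ← hsum] at this
  unfold phiB
  linarith

noncomputable def centeredCosSum (b : ℕ) (θ : ℝ) : ℝ := ∑ k ∈ range b, cos ((2 * k + 1 - b) * θ)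

theorem sum_sin_centered_eq_zero (b : ℕ) (θ : ℝ) :
    ∑ k ∈ range b, sin ((2 * k + 1 - b) * θ) = 0 := by
  have hreflect := sum_range_reflect (fun k : ℕ => sin ((2 * k + 1 - b) * θ)) b
  have hterm : ∀ k ∈ range b,
      sin ((2 * ((b - 1 - k : ℕ) : ℝ) + 1 - b) * θ) = -sin ((2 * k + 1 - b) * θ) := by
    intro k hk
    rw [Nat.cast_sub (by grind), Nat.cast_sub (by grind), ← sin_neg]
    ring_nf
  rw [sum_congr rfl hterm, sum_neg_distrib] at hreflect
  linarith

theorem phiB_eq_abs_centeredCosSum (b : ℕ) (t : ℝ) :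
    phiB b t = |centeredCosSum b (π * t)| := by
  -- factor out `e((b-1)t/2)`; the imaginary parts of what is left cancel under `k ↦ b-1-k`
  have hterm : ∀ m ∈ range b, Complex.exp (2 * π * Complex.I * (t * m)) =
      Complex.exp ((π * t * (b - 1) : ℝ) * Complex.I) *
        ((cos ((2 * m + 1 - b) * (π * t)) : ℝ) +
          (sin ((2 * m + 1 - b) * (π * t)) : ℝ) * Complex.I) := by
    intro m _
    rw [Complex.ofReal_cos, Complex.ofReal_sin, ← Complex.exp_mul_I, ← Complex.exp_add]
    push_cast; ring_nf
  rw [phiB, sum_congr rfl hterm, ← mul_sum, sum_add_distrib, ← sum_mul, ← Complex.ofReal_sum,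
    ← Complex.ofReal_sum, sum_sin_centered_eq_zero, norm_mul, Complex.norm_exp_ofReal_mul_I,
    Complex.ofReal_zero, zero_mul, add_zero, one_mul, Complex.norm_real, Real.norm_eq_abs]
  rfl

theorem phiB_neg (b : ℕ) (t : ℝ) : phiB b (-t) = phiB b t := by
  simp only [phiB_eq_abs_centeredCosSum, centeredCosSum, mul_neg, cos_neg]

theorem phiB_nearestIntDist (b : ℕ) (x : ℝ) : phiB b (nearestIntDist x) = phiB b x := by
  have hx : phiB b (x - round x) = phiB b x := by
    simpa using (phiB_add_intCast b (x - round x) (round x)).symm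
  rw [nearestIntDist]
  rcases abs_choice (x - round x) with h | h <;> rw [h]
  · exact hx
  · rw [phiB_neg, hx]

theorem abs_centered_mul_le_pi_div_two {b k : ℕ} (hk : k < b) {θ : ℝ}
    (hθ : θ ∈ Set.Icc 0 (π / (2 * b))) :
    |(2 * k + 1 - b) * θ| ≤ π / 2 := by
  have hb : (0 : ℝ) < b := by exact_mod_cast Nat.zero_lt_of_lt hk
  have hkb : (k : ℝ) + 1 ≤ b := by exact_mod_cast hk
  have hcoef : |2 * (k : ℝ) + 1 - b| ≤ b :=
    abs_le.2 ⟨by linarith [k.cast_nonneg (α := ℝ)], by linarith⟩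
  rw [abs_mul, abs_of_nonneg hθ.1]
  calc |2 * (k : ℝ) + 1 - b| * θ ≤ b * (π / (2 * b)) := mul_le_mul hcoef hθ.2 hθ.1 hb.le
    _ = π / 2 := by field_simp

theorem centeredCosSum_nonneg (b : ℕ) {θ : ℝ} (hθ : θ ∈ Set.Icc 0 (π / (2 * b))) :
    0 ≤ centeredCosSum b θ :=
  sum_nonneg fun _k hk =>
    cos_nonneg_of_mem_Icc (abs_le.1 (abs_centered_mul_le_pi_div_two (mem_range.1 hk) hθ))

theorem centeredCosSum_antitoneOn (b : ℕ) :
    AntitoneOn (centeredCosSum b) (Set.Icc 0 (π / (2 * b))) := by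
  intro θ₁ hθ₁ θ₂ hθ₂ h
  refine sum_le_sum fun k hk => ?_
  have h₁ := abs_centered_mul_le_pi_div_two (mem_range.1 hk) hθ₁
  have h₂ := abs_centered_mul_le_pi_div_two (mem_range.1 hk) hθ₂
  rw [← cos_abs, ← cos_abs ((2 * k + 1 - b) * θ₁)]
  refine antitoneOn_cos ⟨abs_nonneg _, by linarith [pi_pos]⟩ ⟨abs_nonneg _, by linarith [pi_pos]⟩ ?_
  rw [abs_mul, abs_mul, abs_of_nonneg hθ₁.1, abs_of_nonneg hθ₂.1]
  exact mul_le_mul_of_nonneg_left h (abs_nonneg _)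

theorem pi_mul_mem_Icc {b : ℕ} {t : ℝ} (ht : t ∈ Set.Icc 0 (1 / (2 * (b : ℝ)))) :
    π * t ∈ Set.Icc 0 (π / (2 * b)) :=
  ⟨mul_nonneg pi_pos.le ht.1, by rw [← mul_one_div]; exact mul_le_mul_of_nonneg_left ht.2 pi_pos.le⟩

theorem phiB_antitoneOn (b : ℕ) : AntitoneOn (phiB b) (Set.Icc 0 (1 / (2 * (b : ℝ)))) := by
  intro s hs t ht hst
  rw [phiB_eq_abs_centeredCosSum, phiB_eq_abs_centeredCosSum,
    abs_of_nonneg (centeredCosSum_nonneg b (pi_mul_mem_Icc hs)),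
    abs_of_nonneg (centeredCosSum_nonneg b (pi_mul_mem_Icc ht))]
  exact centeredCosSum_antitoneOn b (pi_mul_mem_Icc hs) (pi_mul_mem_Icc ht)
    (mul_le_mul_of_nonneg_left hst pi_pos.le)

theorem phiB_le_phiB_one_div {b : ℕ} (hb : b ≠ 0) {w : ℝ} (hw : 1 / (2 * b) ≤ w)
    (hw' : w ≤ 1 / 2) :
    phiB b w ≤ phiB b (1 / (2 * b)) := by
  have hbR : (1 : ℝ) ≤ b := by exact_mod_cast Nat.one_le_iff_ne_zero.2 hb
  have hθ₀ : 0 < π * (1 / (2 * b)) := by positivity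
  have hsin₀ : 0 < sin (π * (1 / (2 * b))) :=
    sin_pos_of_pos_of_lt_pi hθ₀ (by
      rw [← mul_one π, mul_assoc, one_mul]
      refine mul_lt_mul_of_pos_left ?_ pi_pos
      rw [div_lt_one (by positivity)]; linarith)
  have hsin_le : sin (π * (1 / (2 * b))) ≤ sin (π * w) :=
    sin_le_sin_of_le_of_le_pi_div_two (by linarith [pi_pos])
      (by nlinarith [pi_pos]) (mul_le_mul_of_nonneg_left hw pi_pos.le)
  have hone : phiB b (1 / (2 * b)) * sin (π * (1 / (2 * b))) = 1 := by
    have := phiB_mul_abs_sin b (1 / (2 * b))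
    rwa [abs_of_pos hsin₀, show π * (b * (1 / (2 * b))) = π / 2 by field_simp, sin_pi_div_two,
      abs_one] at this
  have hw_sin : phiB b w * |sin (π * w)| ≤ 1 := (phiB_mul_abs_sin b w).trans_le (abs_sin_le_one _)
  refine le_of_mul_le_mul_right ?_ hsin₀
  calc phiB b w * sin (π * (1 / (2 * b))) ≤ phiB b w * |sin (π * w)| :=
        mul_le_mul_of_nonneg_left (hsin_le.trans (le_abs_self _)) (norm_nonneg _)
    _ ≤ _ := hw_sin.trans hone.ge

theorem phiB_le_of_le_nearestIntDist {b : ℕ} (hb : b ≠ 0) {x u : ℝ} (hu₀ : 0 ≤ u)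
    (hu : u ≤ 1 / (2 * b)) (hux : u ≤ nearestIntDist x) : phiB b x ≤ phiB b u := by
  have hu_mem : u ∈ Set.Icc 0 (1 / (2 * (b : ℝ))) := ⟨hu₀, hu⟩
  rw [← phiB_nearestIntDist]
  rcases le_total (nearestIntDist x) (1 / (2 * b)) with hx | hx
  · exact phiB_antitoneOn b hu_mem ⟨hu₀.trans hux, hx⟩ hux
  · calc phiB b (nearestIntDist x) ≤ phiB b (1 / (2 * b)) :=
          phiB_le_phiB_one_div hb hx (nearestIntDist_le_half x)
      _ ≤ phiB b u := phiB_antitoneOn b hu_mem ⟨by positivity, le_rfl⟩ hu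

/-- Bound for a product of a pair of `φ_b`-factors: at least one of the two arguments is
at least `‖α(b²-1)b^γ‖/(b+1)` away from the integers, and the product of the two factors
is bounded by `b · φ_b(‖α(b²-1)b^γ‖/(b+1))`. -/
theorem phiB_pair_bound (b : ℕ) (hb : 2 ≤ b) (α β γ : ℝ) :
    (nearestIntDist (α * ((b : ℝ) ^ β + (b : ℝ) ^ (γ + 1))) ≥
        nearestIntDist (α * ((b : ℝ) ^ 2 - 1) * (b : ℝ) ^ γ) / ((b : ℝ) + 1) ∨
      nearestIntDist (α * ((b : ℝ) ^ (β + 1) + (b : ℝ) ^ γ)) ≥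
        nearestIntDist (α * ((b : ℝ) ^ 2 - 1) * (b : ℝ) ^ γ) / ((b : ℝ) + 1)) ∧
    phiB b (α * ((b : ℝ) ^ β + (b : ℝ) ^ (γ + 1))) *
        phiB b (α * ((b : ℝ) ^ (β + 1) + (b : ℝ) ^ γ)) ≤
      (b : ℝ) * phiB b (nearestIntDist (α * ((b : ℝ) ^ 2 - 1) * (b : ℝ) ^ γ) / ((b : ℝ) + 1)) := by
  set X := α * ((b : ℝ) ^ β + (b : ℝ) ^ (γ + 1))
  set Y := α * ((b : ℝ) ^ (β + 1) + (b : ℝ) ^ γ)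
  set D := α * ((b : ℝ) ^ 2 - 1) * (b : ℝ) ^ γ
  set u := nearestIntDist D / ((b : ℝ) + 1)
  have hb₀ : b ≠ 0 := by omega
  have hbpos : (0 : ℝ) < b := by exact_mod_cast Nat.pos_of_ne_zero hb₀
  have hD : D = b * X - Y := by
    simp only [D, X, Y, Real.rpow_add_one hbpos.ne']
    ring
  have hDXY : nearestIntDist D ≤ b * nearestIntDist X + nearestIntDist Y :=
    hD ▸ nearestIntDist_nat_mul_sub_le b X Y
  have hu₀ : 0 ≤ u := div_nonneg (abs_nonneg _) (by positivity)
  have hu : u ≤ 1 / (2 * b) := by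
    rw [div_le_div_iff₀ (by positivity) (by positivity)]
    nlinarith [nearestIntDist_le_half D]
  have hXY : u ≤ nearestIntDist X ∨ u ≤ nearestIntDist Y := by
    by_contra! h
    have : (b + 1) * u = nearestIntDist D := mul_div_cancel₀ _ (by positivity)
    nlinarith [h.1, h.2]
  refine ⟨hXY, ?_⟩
  have hφu {x : ℝ} : u ≤ nearestIntDist x → phiB b x ≤ phiB b u :=
    phiB_le_of_le_nearestIntDist hb₀ hu₀ hu
  rcases hXY with hX | hY
  · calc phiB b X * phiB b Y ≤ phiB b u * b :=
          mul_le_mul (hφu hX) (phiB_le b Y) (norm_nonneg _) (norm_nonneg _)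
      _ = b * phiB b u := mul_comm _ _
  · exact mul_le_mul (phiB_le b X) (hφu hY) (norm_nonneg _) (Nat.cast_nonneg b)
end

section
/- Let b ≥ 2 be an integer. For every ε > 0 there exists a constant C(ε) > 0 such that for all integers 0 ≤ L < M < N and all reals Q ≥ 1, sup_{β ∈ ℝ} ∑_{q ≤ Q} ∑_{h mod q} ∏_{L < n ≤ M} φ_b( (h/q + β)(b^n + b^{2N−n}) )² ≤ C(ε) · ( Q + b^{M − L + εN} ) · Q · b^{M−L}. -/
/-!
Expanding the product of the `φ_b`-factors turns the summand into `|∑_x e(α S(x))|²`, where `x`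
runs over the `b^(M-L)` digit vectors and `S(x) = ∑_n x_n (b^n + b^(2N-n))` is the associated
palindrome. Summing over `h mod q` picks out the pairs with `q ∣ S(x) - S(x')`, each with
weight `q`.
Since distinct digit vectors give distinct palindromes, the diagonal pairs contribute at most
`b^(M-L) Q²`, and each off-diagonal pair at most `Q` times the number of divisors of
`S(x) - S(x') ≠ 0`, which is `O_ε(b^(εN))` because `|S(x) - S(x')| < b^(2N+2)`.
-/

open Real

open Finset
open scoped ComplexConjugate

noncomputable def expTwoPiI (x : ℝ) : ℂ := Complex.exp (2 * π * Complex.I * x)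

theorem expTwoPiI_add (x y : ℝ) : expTwoPiI (x + y) = expTwoPiI x * expTwoPiI y := by
  simp only [expTwoPiI, ← Complex.exp_add]
  push_cast
  ring_nf

theorem expTwoPiI_pow (x : ℝ) (n : ℕ) : expTwoPiI x ^ n = expTwoPiI (n * x) := by
  rw [expTwoPiI, ← Complex.exp_nat_mul, expTwoPiI]
  push_cast
  ring_nf

theorem norm_expTwoPiI (x : ℝ) : ‖expTwoPiI x‖ = 1 := by
  rw [expTwoPiI, show 2 * π * Complex.I * x = ((2 * π * x : ℝ) : ℂ) * Complex.I by push_cast; ring]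
  exact Complex.norm_exp_ofReal_mul_I _

theorem conj_expTwoPiI (x : ℝ) : conj (expTwoPiI x) = expTwoPiI (-x) := by
  rw [expTwoPiI, ← Complex.exp_conj, expTwoPiI]
  simp only [map_mul, Complex.conj_ofReal, Complex.conj_I, map_ofNat]
  push_cast
  ring_nf

theorem expTwoPiI_eq_one_iff {x : ℝ} : expTwoPiI x = 1 ↔ ∃ n : ℤ, x = n := by
  rw [expTwoPiI, Complex.exp_eq_one_iff]
  refine exists_congr fun n => ?_
  rw [show 2 * π * Complex.I * x = (x : ℂ) * (2 * π * Complex.I) by ring,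
    mul_left_inj' Complex.two_pi_I_ne_zero]
  exact_mod_cast Iff.rfl

theorem phiB_eq_norm_sum (b : ℕ) (α : ℝ) : phiB b α = ‖∑ m ∈ range b, expTwoPiI (α * m)‖ := by
  simp only [phiB, expTwoPiI]
  push_cast
  rfl

theorem prod_phiB_sq_eq {ι : Type*} [Fintype ι] [DecidableEq ι] (b : ℕ) (α : ℝ) (d : ι → ℝ) :
    ∏ i, phiB b (α * d i) ^ 2 =
      ‖∑ x ∈ Fintype.piFinset fun _ : ι => range b, expTwoPiI (α * ∑ i, x i * d i)‖ ^ 2 := by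
  simp only [prod_pow, phiB_eq_norm_sum, ← norm_prod, prod_univ_sum, expTwoPiI, mul_sum,
    Complex.ofReal_sum, ← Complex.exp_sum]
  congr! 4 with x _
  refine sum_congr rfl fun i _ => ?_
  push_cast
  ring

theorem sum_range_expTwoPiI_mul_div (q : ℕ) (hq : 0 < q) (t : ℤ) :
    ∑ h ∈ range q, expTwoPiI (h / q * t) = if (q : ℤ) ∣ t then (q : ℂ) else 0 := by
  have hq' : (q : ℝ) ≠ 0 := by positivity
  set ζ := expTwoPiI (t / q)
  have hpow (h : ℕ) : expTwoPiI (h / q * t) = ζ ^ h := by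
    rw [expTwoPiI_pow]
    ring_nf
  have hζ : ζ = 1 ↔ (q : ℤ) ∣ t := by
    simp only [ζ, expTwoPiI_eq_one_iff, div_eq_iff hq']
    exact ⟨fun ⟨n, hn⟩ => ⟨n, by exact_mod_cast hn.trans (mul_comm _ _)⟩,
      fun ⟨n, hn⟩ => ⟨n, by rw [hn]; push_cast; ring⟩⟩
  simp only [hpow]
  split_ifs with hdvd
  · simp [hζ.2 hdvd]
  · have hζq : ζ ^ q = 1 := by
      rw [expTwoPiI_pow, mul_div_cancel₀ _ hq', expTwoPiI_eq_one_iff]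
      exact ⟨t, rfl⟩
    have := geom_sum_mul ζ q
    rw [hζq, sub_self, mul_eq_zero] at this
    exact this.resolve_right (sub_ne_zero.2 (mt hζ.1 hdvd))

theorem sum_range_norm_sum_expTwoPiI_sq_le {κ : Type*} (X : Finset κ) (S : κ → ℤ) {q : ℕ}
    (hq : 0 < q) (β : ℝ) :
    ∑ h ∈ range q, ‖∑ x ∈ X, expTwoPiI ((h / q + β) * S x)‖ ^ 2 ≤
      ∑ x ∈ X, ∑ y ∈ X, if (q : ℤ) ∣ S x - S y then (q : ℝ) else 0 := by
  have hexpand (h : ℕ) : (‖∑ x ∈ X, expTwoPiI ((h / q + β) * S x)‖ ^ 2 : ℂ) =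
      ∑ x ∈ X, ∑ y ∈ X, expTwoPiI (β * ↑(S x - S y)) * expTwoPiI (h / q * ↑(S x - S y)) := by
    rw [← Complex.mul_conj', map_sum, sum_mul_sum]
    refine sum_congr rfl fun x _ => sum_congr rfl fun y _ => ?_
    rw [conj_expTwoPiI, ← expTwoPiI_add, ← expTwoPiI_add]
    push_cast
    ring_nf
  have hsum : ((∑ h ∈ range q, ‖∑ x ∈ X, expTwoPiI ((h / q + β) * S x)‖ ^ 2 : ℝ) : ℂ) =
      ∑ x ∈ X, ∑ y ∈ X,
        expTwoPiI (β * ↑(S x - S y)) * if (q : ℤ) ∣ S x - S y then (q : ℂ) else 0 := by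
    simp only [Complex.ofReal_sum, Complex.ofReal_pow, hexpand]
    rw [sum_comm]
    refine sum_congr rfl fun x _ => ?_
    rw [sum_comm]
    simp only [← mul_sum, sum_range_expTwoPiI_mul_div q hq]
  calc ∑ h ∈ range q, ‖∑ x ∈ X, expTwoPiI ((h / q + β) * S x)‖ ^ 2
      = ‖((∑ h ∈ range q, ‖∑ x ∈ X, expTwoPiI ((h / q + β) * S x)‖ ^ 2 : ℝ) : ℂ)‖ :=
        (Complex.norm_of_nonneg (by positivity)).symm
    _ ≤ ∑ x ∈ X, ∑ y ∈ X,
        ‖expTwoPiI (β * ↑(S x - S y)) * if (q : ℤ) ∣ S x - S y then (q : ℂ) else 0‖ := by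
      rw [hsum]
      exact (norm_sum_le _ _).trans (sum_le_sum fun x _ => norm_sum_le _ _)
    _ = ∑ x ∈ X, ∑ y ∈ X, if (q : ℤ) ∣ S x - S y then (q : ℝ) else 0 := by
      simp only [norm_mul, norm_expTwoPiI, one_mul, apply_ite norm, norm_zero, Complex.norm_natCast]

theorem natCast_add_one_le_rpow {δ x : ℝ} (hδ : 0 < δ) (hx : 2 ^ δ⁻¹ ≤ x) (k : ℕ) :
    (k + 1 : ℝ) ≤ (x ^ k) ^ δ := by
  have hx0 : 0 ≤ x := (by positivity : (0 : ℝ) ≤ 2 ^ δ⁻¹).trans hx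
  have h2 : 2 ≤ x ^ δ := by
    calc (2 : ℝ) = (2 ^ δ⁻¹) ^ δ := by rw [← rpow_mul zero_le_two, inv_mul_cancel₀ hδ.ne', rpow_one]
      _ ≤ x ^ δ := by gcongr
  calc (k + 1 : ℝ) ≤ 2 ^ k := by exact_mod_cast Nat.lt_two_pow_self
    _ ≤ (x ^ δ) ^ k := by gcongr
    _ = (x ^ k) ^ δ := by
      rw [← rpow_natCast, ← rpow_natCast, ← rpow_mul hx0, ← rpow_mul hx0, mul_comm]

theorem natCast_add_one_le_mul_rpow {δ x : ℝ} (hδ : 0 < δ) (hx : 2 ≤ x) (k : ℕ) :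
    (k + 1 : ℝ) ≤ (1 + (δ * log 2)⁻¹) * (x ^ k) ^ δ := by
  set c := δ * log 2
  have hc : 0 < c := mul_pos hδ (log_pos one_lt_two)
  calc (k + 1 : ℝ) ≤ (1 + c⁻¹) * (1 + k * c) := by
        have : c⁻¹ * (k * c) = k := by field_simp
        nlinarith [inv_pos.2 hc, (by positivity : (0 : ℝ) ≤ k * c)]
    _ ≤ (1 + c⁻¹) * exp (k * c) := by gcongr; linarith [add_one_le_exp (k * c)]
    _ = (1 + c⁻¹) * (2 ^ k) ^ δ := by
        rw [← rpow_natCast, ← rpow_mul zero_le_two, rpow_def_of_pos two_pos]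
        congr 2
        ring
    _ ≤ (1 + c⁻¹) * (x ^ k) ^ δ := by gcongr

theorem card_divisors_le_mul_rpow {δ : ℝ} (hδ : 0 < δ) :
    ∃ C > 0, ∀ m : ℕ, m ≠ 0 → (#m.divisors : ℝ) ≤ C * m ^ δ := by
  set K := 1 + (δ * log 2)⁻¹
  have hK : 1 ≤ K := le_add_of_nonneg_right (by have := log_pos one_lt_two; positivity)
  set T := ⌈(2 : ℝ) ^ δ⁻¹⌉₊
  refine ⟨K ^ T, by positivity, fun m hm => ?_⟩
  have hfactor : ∀ p ∈ m.primeFactors, ((m.factorization p + 1 : ℕ) : ℝ) ≤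
      (if p < T then K else 1) * ((p : ℝ) ^ m.factorization p) ^ δ := by
    intro p hp
    have hp2 : (2 : ℝ) ≤ p := by exact_mod_cast (Nat.prime_of_mem_primeFactors hp).two_le
    push_cast
    split_ifs with hpT
    · exact natCast_add_one_le_mul_rpow hδ hp2 _
    · rw [one_mul]
      exact natCast_add_one_le_rpow hδ ((Nat.le_ceil _).trans (by exact_mod_cast not_lt.1 hpT)) _
  have hmδ : (m : ℝ) ^ δ = ∏ p ∈ m.primeFactors, ((p : ℝ) ^ m.factorization p) ^ δ := by
    rw [finsetProd_rpow _ _ fun p _ => by positivity]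
    conv_lhs => rw [← Nat.prod_factorization_pow_eq_self hm]
    rw [Nat.prod_factorization_eq_prod_primeFactors]
    push_cast
    rfl
  have hsmall : ∏ p ∈ m.primeFactors, (if p < T then K else 1) ≤ K ^ T := by
    rw [prod_ite, prod_const_one, mul_one, prod_const]
    refine pow_le_pow_right₀ hK ((card_le_card fun p hp => ?_).trans (card_range T).le)
    exact mem_range.2 (mem_filter.1 hp).2
  calc (#m.divisors : ℝ) = ∏ p ∈ m.primeFactors, ((m.factorization p + 1 : ℕ) : ℝ) := by
        rw [Nat.card_divisors hm]; push_cast; rfl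
    _ ≤ ∏ p ∈ m.primeFactors, (if p < T then K else 1) * ((p : ℝ) ^ m.factorization p) ^ δ :=
        prod_le_prod (fun _ _ => by positivity) hfactor
    _ ≤ K ^ T * m ^ δ := by
        rw [prod_mul_distrib, hmδ]
        gcongr

theorem sum_Icc_floor_le_sq {Q : ℝ} (hQ : 0 ≤ Q) : ∑ q ∈ Icc 1 ⌊Q⌋₊, (q : ℝ) ≤ Q ^ 2 := by
  have hle : ∀ q ∈ Icc 1 ⌊Q⌋₊, (q : ℝ) ≤ Q := fun q hq =>
    (Nat.cast_le.2 (mem_Icc.1 hq).2).trans (Nat.floor_le hQ)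
  calc ∑ q ∈ Icc 1 ⌊Q⌋₊, (q : ℝ) ≤ #(Icc 1 ⌊Q⌋₊) * Q := by
        simpa using sum_le_card_nsmul _ _ _ hle
    _ ≤ Q * Q := by
        gcongr
        simpa using Nat.floor_le hQ
    _ = Q ^ 2 := (sq Q).symm

theorem sum_Icc_floor_ite_dvd_le {Q : ℝ} (hQ : 0 ≤ Q) {m : ℤ} (hm : m ≠ 0) :
    ∑ q ∈ Icc 1 ⌊Q⌋₊, (if (q : ℤ) ∣ m then (q : ℝ) else 0) ≤ #m.natAbs.divisors * Q := by
  rw [← sum_filter]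
  set F : Finset ℕ := {q ∈ Icc 1 ⌊Q⌋₊ | (q : ℤ) ∣ m}
  have hsub : F ⊆ m.natAbs.divisors := fun q hq =>
    Nat.mem_divisors.2 ⟨Int.natCast_dvd.1 (mem_filter.1 hq).2, Int.natAbs_ne_zero.2 hm⟩
  calc ∑ q ∈ F, (q : ℝ) ≤ #F * Q := by
        refine (sum_le_card_nsmul _ _ _ fun q hq => ?_).trans_eq (nsmul_eq_mul _ _)
        exact (Nat.cast_le.2 (mem_Icc.1 (mem_filter.1 hq).1).2).trans (Nat.floor_le hQ)
    _ ≤ #m.natAbs.divisors * Q := by gcongr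

theorem sum_Icc_sum_range_norm_sum_expTwoPiI_sq_le {κ : Type*} [DecidableEq κ] (X : Finset κ)
    (S : κ → ℤ) (hS : Set.InjOn S X) {Q D : ℝ} (hQ : 0 ≤ Q) (hD : 0 ≤ D)
    (hdiv : ∀ x ∈ X, ∀ y ∈ X, x ≠ y → (#(S x - S y).natAbs.divisors : ℝ) ≤ D) (β : ℝ) :
    ∑ q ∈ Icc 1 ⌊Q⌋₊, ∑ h ∈ range q, ‖∑ x ∈ X, expTwoPiI ((h / q + β) * S x)‖ ^ 2 ≤
      #X * Q ^ 2 + #X ^ 2 * (D * Q) := by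
  have hpair : ∀ x ∈ X, ∀ y ∈ X,
      ∑ q ∈ Icc 1 ⌊Q⌋₊, (if (q : ℤ) ∣ S x - S y then (q : ℝ) else 0) ≤
        (if x = y then Q ^ 2 else 0) + D * Q := by
    intro x hx y hy
    split_ifs with hxy
    · subst hxy
      simpa using (sum_Icc_floor_le_sq hQ).trans (le_add_of_nonneg_right (mul_nonneg hD hQ))
    · rw [zero_add]
      have hne : S x - S y ≠ 0 := sub_ne_zero.2 fun h => hxy (hS hx hy h)
      exact (sum_Icc_floor_ite_dvd_le hQ hne).trans (by gcongr; exact hdiv x hx y hy hxy)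
  calc ∑ q ∈ Icc 1 ⌊Q⌋₊, ∑ h ∈ range q, ‖∑ x ∈ X, expTwoPiI ((h / q + β) * S x)‖ ^ 2
      ≤ ∑ q ∈ Icc 1 ⌊Q⌋₊, ∑ x ∈ X, ∑ y ∈ X, if (q : ℤ) ∣ S x - S y then (q : ℝ) else 0 :=
        sum_le_sum fun q hq => sum_range_norm_sum_expTwoPiI_sq_le X S (mem_Icc.1 hq).1 β
    _ = ∑ x ∈ X, ∑ y ∈ X, ∑ q ∈ Icc 1 ⌊Q⌋₊, if (q : ℤ) ∣ S x - S y then (q : ℝ) else 0 := by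
        rw [sum_comm]
        exact sum_congr rfl fun x _ => sum_comm
    _ ≤ ∑ x ∈ X, ∑ y ∈ X, ((if x = y then Q ^ 2 else 0) + D * Q) :=
        sum_le_sum fun x hx => sum_le_sum fun y hy => hpair x hx y hy
    _ = #X * Q ^ 2 + #X ^ 2 * (D * Q) := by
        simp only [sum_add_distrib, sum_ite_eq, sum_const, nsmul_eq_mul]
        rw [sum_ite_mem, inter_self, sum_const, nsmul_eq_mul]
        ring

theorem Nat.eq_and_eq_of_add_mul_eq {E a a' c c' : ℕ} (ha : a < E) (ha' : a' < E)
    (h : a + E * c = a' + E * c') : a = a' ∧ c = c' := by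
  have hE : 0 < E := by omega
  obtain ⟨hc, ha⟩ := (Nat.div_mod_unique hE).2 ⟨h, ha⟩
  obtain ⟨hc', ha'⟩ := (Nat.div_mod_unique hE).2 ⟨rfl, ha'⟩
  exact ⟨ha.symm.trans ha', hc.symm.trans hc'⟩

section Digits

variable {ι : Type*} [DecidableEq ι] {b : ℕ} {e : ι → ℕ}

theorem sum_mul_pow_lt (hb : 0 < b) {s : Finset ι} (he : Set.InjOn e s) {x : ι → ℕ}
    (hx : ∀ i ∈ s, x i < b) {K : ℕ} (hK : ∀ i ∈ s, e i < K) :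
    ∑ i ∈ s, x i * b ^ e i < b ^ K := by
  induction s using Finset.induction_on_max_value e generalizing K with
  | empty => simp [Nat.pow_pos hb]
  | insert a t hat hmax ih =>
    have hlt : ∑ i ∈ t, x i * b ^ e i < b ^ e a := by
      refine ih (he.mono (by simp)) (fun i hi => hx i (by simp [hi])) fun i hi => ?_
      refine (hmax i hi).lt_of_ne fun h => ?_
      exact hat (he (by simp [hi]) (by simp) h ▸ hi)
    calc ∑ i ∈ insert a t, x i * b ^ e i
        = x a * b ^ e a + ∑ i ∈ t, x i * b ^ e i := sum_insert hat
      _ < (x a + 1) * b ^ e a := by linarith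
      _ ≤ b * b ^ e a := Nat.mul_le_mul_right _ (hx a (by simp))
      _ ≤ b ^ K := by
        rw [← pow_succ']
        exact Nat.pow_le_pow_right hb (hK a (by simp))

theorem eq_of_sum_mul_pow_eq (hb : 0 < b) {s : Finset ι} (he : Set.InjOn e s) {x y : ι → ℕ}
    (hx : ∀ i ∈ s, x i < b) (hy : ∀ i ∈ s, y i < b)
    (h : ∑ i ∈ s, x i * b ^ e i = ∑ i ∈ s, y i * b ^ e i) : ∀ i ∈ s, x i = y i := by
  induction s using Finset.induction_on_max_value e with
  | empty => simp
  | insert a t hat hmax ih =>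
    have het : Set.InjOn e t := he.mono (by simp)
    have hlt : ∀ i ∈ t, e i < e a := fun i hi =>
      (hmax i hi).lt_of_ne fun h => hat (he (by simp [hi]) (by simp) h ▸ hi)
    have low (z : ι → ℕ) (hz : ∀ i ∈ insert a t, z i < b) :=
      sum_mul_pow_lt hb het (fun i hi => hz i (by simp [hi])) hlt
    rw [sum_insert hat, sum_insert hat, add_comm, add_comm (y a * _), mul_comm (x a),
      mul_comm (y a)] at h
    obtain ⟨htail, hhead⟩ := Nat.eq_and_eq_of_add_mul_eq (low x hx) (low y hy) h
    have ht := ih het (fun i hi => hx i (by simp [hi])) (fun i hi => hy i (by simp [hi])) htail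
    simpa [hhead] using ht

end Digits

section Palindromes

variable {b N : ℕ} {s : Finset ℕ}

def palindromicSum (b N : ℕ) {s : Finset ℕ} (x : s → ℕ) : ℕ :=
  ∑ n, x n * (b ^ (n : ℕ) + b ^ (2 * N - n))

theorem palindromicSum_eq (hs : ∀ n ∈ s, n < N) (x : s → ℕ) :
    palindromicSum b N x = ∑ n, x n * b ^ (n : ℕ) + b ^ N * ∑ n, x n * b ^ (N - n) := by
  rw [palindromicSum, mul_sum, ← sum_add_distrib]
  refine sum_congr rfl fun n _ => ?_
  rw [show 2 * N - n = N + (N - n) by have := hs n n.2; omega, pow_add]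
  ring

theorem palindromicSum_lt (hb : 1 < b) (hs : ∀ n ∈ s, n < N) {x : s → ℕ} (hx : ∀ n, x n < b) :
    palindromicSum b N x < b ^ (2 * N + 2) := by
  have hb0 : 0 < b := by omega
  have hlow : ∑ n, x n * b ^ (n : ℕ) < b ^ N :=
    sum_mul_pow_lt hb0 Subtype.val_injective.injOn (fun n _ => hx n) fun n _ => hs n n.2
  have hinj : Set.InjOn (fun n : s => N - n) (univ : Finset s) := fun n _ m _ (h : N - n = N - m) =>
    Subtype.ext (by have := hs n n.2; have := hs m m.2; omega)
  have hhigh : ∑ n, x n * b ^ (N - n) < b ^ (N + 1) :=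
    sum_mul_pow_lt hb0 hinj (fun n _ => hx n) fun n _ => by omega
  calc palindromicSum b N x < b ^ N + b ^ N * b ^ (N + 1) := by
        rw [palindromicSum_eq hs]; gcongr
    _ = b ^ N * (b ^ (N + 1) + 1) := by ring
    _ ≤ b ^ N * b ^ (N + 2) := by
        gcongr
        rw [pow_succ _ (N + 1)]
        nlinarith [Nat.one_le_pow (N + 1) b (by omega)]
    _ = b ^ (2 * N + 2) := by ring

theorem palindromicSum_injOn (hb : 0 < b) (hs : ∀ n ∈ s, n < N) :
    Set.InjOn (palindromicSum b N) (Fintype.piFinset fun _ : s => range b : Set (s → ℕ)) := by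
  intro x hx y hy h
  simp only [mem_coe, Fintype.mem_piFinset, mem_range] at hx hy
  have hlow (z : s → ℕ) (hz : ∀ n, z n < b) : ∑ n, z n * b ^ (n : ℕ) < b ^ N :=
    sum_mul_pow_lt hb Subtype.val_injective.injOn (fun n _ => hz n) fun n _ => hs n n.2
  rw [palindromicSum_eq hs, palindromicSum_eq hs] at h
  have hdigits := eq_of_sum_mul_pow_eq hb Subtype.val_injective.injOn (fun n _ => hx n)
    (fun n _ => hy n) (Nat.eq_and_eq_of_add_mul_eq (hlow x hx) (hlow y hy) h).1
  exact funext fun n => hdigits n (mem_univ n)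

theorem card_divisors_palindromicSum_sub_le (hb : 1 < b) (hs : ∀ n ∈ s, n < N) {ε C : ℝ}
    (hε : 0 ≤ ε) (hC0 : 0 ≤ C) (hC : ∀ m : ℕ, m ≠ 0 → (#m.divisors : ℝ) ≤ C * m ^ (ε / 4))
    {x y : s → ℕ} (hx : x ∈ Fintype.piFinset fun _ : s => range b)
    (hy : y ∈ Fintype.piFinset fun _ : s => range b) (hxy : x ≠ y) :
    (#((palindromicSum b N x : ℤ) - palindromicSum b N y).natAbs.divisors : ℝ) ≤
      C * (b : ℝ) ^ (ε * N) := by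
  set m := ((palindromicSum b N x : ℤ) - palindromicSum b N y).natAbs
  have hm : m ≠ 0 := by
    simpa [m, sub_eq_zero] using (palindromicSum_injOn (by omega) hs).ne hx hy hxy
  have hmlt : m < b ^ (2 * N + 2) := by
    simp only [Fintype.mem_piFinset, mem_range] at hx hy
    have := palindromicSum_lt hb hs hx
    have := palindromicSum_lt hb hs hy
    omega
  obtain ⟨n, -⟩ := Function.ne_iff.1 hxy
  have hN : (1 : ℝ) ≤ N := by have := hs n n.2; exact_mod_cast (by omega : 1 ≤ N)
  calc (#m.divisors : ℝ) ≤ C * m ^ (ε / 4) := hC m hm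
    _ ≤ C * ((b : ℝ) ^ (2 * N + 2)) ^ (ε / 4) := by gcongr; exact_mod_cast hmlt.le
    _ ≤ C * (b : ℝ) ^ (ε * N) := by
      rw [← rpow_natCast, ← rpow_mul (by positivity)]
      refine mul_le_mul_of_nonneg_left (rpow_le_rpow_of_exponent_le ?_ ?_) hC0
      · exact_mod_cast hb.le
      · push_cast
        nlinarith

end Palindromes

theorem prod_phiB_sq_eq_norm_sq_sum_palindromicSum (b N : ℕ) (s : Finset ℕ) (α : ℝ) :
    ∏ n ∈ s, phiB b (α * ((b : ℝ) ^ n + (b : ℝ) ^ (2 * N - n))) ^ 2 =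
      ‖∑ x ∈ Fintype.piFinset fun _ : s => range b, expTwoPiI (α * palindromicSum b N x)‖ ^ 2 := by
  rw [← prod_coe_sort, prod_phiB_sq_eq]
  simp only [palindromicSum]
  push_cast
  rfl

/-- `L²`-bound for partial products of `φ_b`-factors over shifted Farey fractions. -/
theorem phiB_L2_bound (b : ℕ) (hb : 2 ≤ b) (ε : ℝ) (hε : 0 < ε) :
    ∃ C : ℝ, 0 < C ∧ ∀ (L M N : ℕ), L < M → M < N → ∀ Q : ℝ, 1 ≤ Q → ∀ β : ℝ,
      ∑ q ∈ Finset.Icc 1 ⌊Q⌋₊, ∑ h ∈ Finset.range q,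
          ∏ n ∈ Finset.Ioc L M,
            phiB b (((h : ℝ) / q + β) * ((b : ℝ) ^ n + (b : ℝ) ^ (2 * N - n))) ^ 2 ≤
        C * (Q + (b : ℝ) ^ ((M : ℝ) - L + ε * N)) * Q * (b : ℝ) ^ (M - L) := by
  obtain ⟨C, hC0, hC⟩ := card_divisors_le_mul_rpow (δ := ε / 4) (by positivity)
  refine ⟨1 + C, by positivity, fun L M N hLM hMN Q hQ β => ?_⟩
  have hs : ∀ n ∈ Ioc L M, n < N := fun n hn => (mem_Ioc.1 hn).2.trans_lt hMN
  set X := Fintype.piFinset fun _ : Ioc L M => range b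
  set S : (Ioc L M → ℕ) → ℤ := fun x => palindromicSum b N x
  have hS : Set.InjOn S X := fun x hx y hy h =>
    palindromicSum_injOn (by omega) hs hx hy (Int.ofNat_inj.1 h)
  have hX : (#X : ℝ) = (b : ℝ) ^ (M - L) := by simp [X]
  have hsplit : (b : ℝ) ^ ((M : ℝ) - L + ε * N) = (b : ℝ) ^ (M - L) * (b : ℝ) ^ (ε * N) := by
    rw [rpow_add (by positivity), ← Nat.cast_sub hLM.le, rpow_natCast]
  calc _ = ∑ q ∈ Icc 1 ⌊Q⌋₊, ∑ h ∈ range q, ‖∑ x ∈ X, expTwoPiI ((h / q + β) * S x)‖ ^ 2 := by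
        simp only [prod_phiB_sq_eq_norm_sq_sum_palindromicSum, S, Int.cast_natCast, X]
    _ ≤ #X * Q ^ 2 + #X ^ 2 * (C * (b : ℝ) ^ (ε * N) * Q) :=
        sum_Icc_sum_range_norm_sum_expTwoPiI_sq_le X S hS (by linarith) (by positivity)
          (fun _ hx _ hy hxy => card_divisors_palindromicSum_sub_le hb hs hε.le hC0.le hC hx hy hxy)
          β
    _ ≤ _ := by
        rw [hX, hsplit, ← sub_nonneg]
        ring_nf
        positivity
end
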